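/- Let p be a prime, g an integer with p ∤ g, u_0 ∈ {1,…,p−1}, and k ≥ 1 an integer with 2^k < p. Then for every positive integer N ≤ ℓ one has ν_k(N) ≥ N·2^{k−1}/p. -/

import Mathlib

open Pointwise

/-- The exponential generator sequence: `u 0 = u0` and `u (n+1)` is the representative in
`{0,…,p-1}` of `g ^ (u n) mod p` (which lies in `{1,…,p-1}` when `p ∤ g`). -/
def expSeq (p : ℕ) (g : ℤ) (u0 : ℕ) : ℕ → ℕ
  | 0 => u0
  | n + 1 => ((g ^ expSeq p g u0 n) % (p : ℤ)).toNat

/-- `d` is the least eventual period of the sequence `f`. -/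
def IsLeastPeriod (f : ℕ → ℕ) (d : ℕ) : Prop :=
  IsLeast {m : ℕ | 0 < m ∧ ∃ s : ℕ, ∀ n : ℕ, s ≤ n → f (n + m) = f n} d

/-- `s` is the least preperiod of `f` with respect to the period `t`. -/
def IsLeastPreperiod (f : ℕ → ℕ) (t s : ℕ) : Prop :=
  IsLeast {s : ℕ | ∀ n : ℕ, s ≤ n → f (n + t) = f n} s

/-- `I` is an interval of `K` consecutive integers. -/
def IsIntervalOf (I : Finset ℤ) (K : ℕ) : Prop :=
  ∃ x : ℤ, I = Finset.Icc x (x + K - 1)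

/-- `R_{a,b,g,p}(I,J)`: the number of `(u,x,y) ∈ {1,…,p-1} × I × J` with
`a·u ≡ x (mod p)` and `b·g^u ≡ y (mod p)`. -/
def Rcount (p : ℕ) (a b g : ℤ) (I J : Finset ℤ) : ℕ :=
  (((Finset.Icc 1 (p - 1)) ×ˢ I ×ˢ J).filter
    (fun w : ℕ × ℤ × ℤ =>
      (a * w.1 - w.2.1) % (p : ℤ) = 0 ∧ (b * g ^ w.1 - w.2.2) % (p : ℤ) = 0)).card

/-- `ν_k(N)`: the number of distinct values among `f 0 mod 2^k, …, f (N-1) mod 2^k`. -/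
def nuCount (f : ℕ → ℕ) (k N : ℕ) : ℕ :=
  ((Finset.range N).image (fun n => f n % 2 ^ k)).card

/-- `V_k(ω)`: the number of `n < l` with `f n mod 2^k = ω`. -/
def Vcount (f : ℕ → ℕ) (k l ω : ℕ) : ℕ :=
  ((Finset.range l).filter (fun n => f n % 2 ^ k = ω)).card

/-!
The terms `u_0, …, u_{ℓ-1}` are pairwise distinct: a repetition `u_i = u_j` with `i < j < ℓ`
makes `j - i` an eventual period, so `t ≤ j - i`, and propagating it from index `i` shows that
`i` is a preperiod, so `s ≤ i`, whence `j ≥ s + t`. These terms lie in `[0, p)`, and a residue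
class modulo `2^k` meets `[0, p)` in at most `p / 2^k + 1 ≤ p / 2^(k-1)` points, so `N` distinct
terms occupy at least `N · 2^(k-1) / p` classes.
-/

theorem apply_add_eq_of_apply_eq {f : ℕ → ℕ} (hf : ∀ i j, f i = f j → f (i + 1) = f (j + 1))
    {i j : ℕ} (h : f i = f j) (m : ℕ) : f (i + m) = f (j + m) := by
  induction m with
  | zero => exact h
  | succ m ih => exact hf _ _ ih

theorem injOn_Iio_of_isLeastPreperiod {f : ℕ → ℕ}
    (hf : ∀ i j, f i = f j → f (i + 1) = f (j + 1)) {t s : ℕ}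
    (ht : IsLeastPeriod f t) (hs : IsLeastPreperiod f t s) :
    Set.InjOn f (Set.Iio (s + t)) := by
  suffices key : ∀ i j, i < j → j < s + t → f i ≠ f j by
    intro i hi j hj hij
    by_contra hne
    rcases Nat.lt_or_gt_of_ne hne with h | h
    · exact key i j h hj hij
    · exact key j i h hi hij.symm
  intro i j hij hj heq
  set d := j - i
  have hperiodic : Function.Periodic (fun n => f (i + n)) d := fun n => by
    have := (apply_add_eq_of_apply_eq hf heq n).symm
    rwa [show j + n = i + (n + d) by omega] at this
  have htd : t ≤ d := ht.2 ⟨by omega, i, fun n hn => by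
    have : f (i + (n - i + d)) = f (i + (n - i)) := hperiodic (n - i)
    rwa [show i + (n - i + d) = n + d by omega, Nat.add_sub_cancel' hn] at this⟩
  have hsi : s ≤ i := hs.2 fun n hn => by
    obtain ⟨a, rfl⟩ := Nat.exists_eq_add_of_le hn
    calc f (i + a + t) = f (i + (a + t + s * d)) := by
          simpa [add_assoc] using ((hperiodic.nat_mul s) (a + t)).symm
      _ = f (i + a + s * d + t) := by ring_nf
      _ = f (i + a + s * d) := hs.1 _ (by nlinarith [show 1 ≤ d by omega])
      _ = f (i + a) := by simpa [add_assoc] using (hperiodic.nat_mul s) a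
  omega

theorem card_le_mul_card_image_mod {S : Finset ℕ} {p : ℕ} (hS : ∀ x ∈ S, x < p) (m : ℕ) :
    S.card ≤ (p / m + 1) * (S.image (· % m)).card := by
  refine Finset.card_le_mul_card_image S _ fun r _ => ?_
  calc (S.filter (· % m = r)).card ≤ (Finset.range (p / m + 1)).card := by
        refine Finset.card_le_card_of_injOn (· / m) (fun x hx => ?_) fun x hx y hy hxy => ?_
        · have := Nat.div_le_div_right (c := m) (hS x (Finset.mem_filter.1 hx).1).le
          simp only [Finset.coe_range, Set.mem_Iio]
          omega
        · simp only [Finset.coe_filter] at hx hy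
          rw [← Nat.div_add_mod x m, ← Nat.div_add_mod y m, show x / m = y / m from hxy, hx.2, hy.2]
    _ = p / m + 1 := Finset.card_range _

theorem div_add_one_mul_pow_pred_le {p k : ℕ} (hk : 1 ≤ k) (h : 2 ^ k ≤ p) :
    (p / 2 ^ k + 1) * 2 ^ (k - 1) ≤ p := by
  have hpow : 2 ^ k = 2 * 2 ^ (k - 1) := by rw [← pow_succ']; congr 1; omega
  have := Nat.div_mul_le_self p (2 ^ k)
  rw [hpow] at this h ⊢
  nlinarith

theorem expSeq_succ_eq_of_eq {p : ℕ} {g : ℤ} {u0 i j : ℕ}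
    (h : expSeq p g u0 i = expSeq p g u0 j) :
    expSeq p g u0 (i + 1) = expSeq p g u0 (j + 1) := by
  simp only [expSeq, h]

theorem expSeq_lt {p : ℕ} (hp : 0 < p) (g : ℤ) {u0 : ℕ} (hu0 : u0 < p) (n : ℕ) :
    expSeq p g u0 n < p := by
  cases n with
  | zero => exact hu0
  | succ n =>
    have := Int.emod_lt_of_pos (g ^ expSeq p g u0 n) (Int.natCast_pos.2 hp)
    simp only [expSeq]
    omega

theorem nu_ge_trivial_bound_general
    (p : ℕ) (g : ℤ)
    (u0 : ℕ) (hu0 : u0 ∈ Finset.Icc 1 (p - 1)) (k : ℕ) (hk : 1 ≤ k)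
    (h2k : 2 ^ k < p)
    (t s : ℕ) (ht : IsLeastPeriod (expSeq p g u0) t)
    (hs : IsLeastPreperiod (expSeq p g u0) t s) :
    ∀ N : ℕ, 0 < N → N ≤ s + t →
      (N : ℝ) * 2 ^ (k - 1) / p ≤ (nuCount (expSeq p g u0) k N : ℝ) := by
  intro N _ hN
  set f := expSeq p g u0
  have hp : 0 < p := Nat.zero_lt_of_lt h2k
  have hinj : Set.InjOn f (Finset.range N) :=
    (injOn_Iio_of_isLeastPreperiod (fun _ _ h => expSeq_succ_eq_of_eq h) ht hs).mono
      fun n hn => lt_of_lt_of_le (Finset.mem_range.1 hn) hN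
  have hcount : N ≤ (p / 2 ^ k + 1) * nuCount f k N := by
    have := card_le_mul_card_image_mod (S := (Finset.range N).image f)
      (fun x hx => by
        obtain ⟨n, -, rfl⟩ := Finset.mem_image.1 hx
        exact expSeq_lt hp g (by have := Finset.mem_Icc.1 hu0; omega) n) (2 ^ k)
    rwa [Finset.card_image_of_injOn hinj, Finset.card_range, Finset.image_image] at this
  have hnat : N * 2 ^ (k - 1) ≤ p * nuCount f k N := calc
    N * 2 ^ (k - 1) ≤ (p / 2 ^ k + 1) * 2 ^ (k - 1) * nuCount f k N := by
      rw [mul_right_comm]; exact Nat.mul_le_mul_right _ hcount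
    _ ≤ p * nuCount f k N := Nat.mul_le_mul_right _ (div_add_one_mul_pow_pred_le hk h2k.le)
  rw [div_le_iff₀ (by exact_mod_cast hp), mul_comm (nuCount f k N : ℝ)]
  exact_mod_cast hnat

/-- if `2^k < p` then for every `0 < N ≤ ℓ = s + t` one has
`ν_k(N) ≥ N·2^{k-1}/p`. -/
theorem nu_ge_trivial_bound
    (p : ℕ) (hp : p.Prime) (g : ℤ) (hg : ¬ (p : ℤ) ∣ g)
    (u0 : ℕ) (hu0 : u0 ∈ Finset.Icc 1 (p - 1)) (k : ℕ) (hk : 1 ≤ k)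
    (h2k : 2 ^ k < p)
    (t s : ℕ) (ht : IsLeastPeriod (expSeq p g u0) t)
    (hs : IsLeastPreperiod (expSeq p g u0) t s) :
    ∀ N : ℕ, 0 < N → N ≤ s + t →
      (N : ℝ) * 2 ^ (k - 1) / p ≤ (nuCount (expSeq p g u0) k N : ℝ) :=
  nu_ge_trivial_bound_general p g u0 hu0 k hk h2k t s ht hs
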